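/- arXiv:1612.05549 — 2 statements merged into one kernel-verified Lean document; each statement's English description precedes it below -/
import Mathlib

section
/- For every n ≥ 1, the inner boundary of V_n contains no tessellation vertex: ∂V_n ∩ V₀ = ∅. -/
/-- The external boundary `∂⃗Λ` of a set of vertices `Λ`:
vertices outside `Λ` adjacent to some vertex of `Λ`. -/
def extBoundary {V : Type*} (G : SimpleGraph V) (Λ : Set V) : Set V :=
  {y | y ∉ Λ ∧ ∃ x ∈ Λ, G.Adj x y}

/-- The inner boundary `∂Λ`: vertices of `Λ` adjacent to some vertex outside `Λ`. -/
def innBoundary {V : Type*} (G : SimpleGraph V) (Λ : Set V) : Set V :=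
  {x | x ∈ Λ ∧ ∃ y ∉ Λ, G.Adj x y}

/-- The closure `Λ̄ := Λ ∪ ∂⃗Λ`. -/
def graphClosure {V : Type*} (G : SimpleGraph V) (Λ : Set V) : Set V :=
  Λ ∪ extBoundary G Λ

/-- The plaquette `{y} ∪ N_y` at a vertex `y`. -/
def plaquette {V : Type*} (G : SimpleGraph V) (y : V) : Set V :=
  insert y (G.neighborSet y)

/-- `tessV0 G y₁ n` is the set `V_{0,n+1}` of the paper (so index `0` is `V_{0,1} = {y₁}`):
`V_{0,n+1} := V_{0,n} ∪ ∂⃗V_n` where `V_n = ⋃_{y ∈ V_{0,n}} ({y} ∪ N_y)`. -/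
def tessV0 {V : Type*} (G : SimpleGraph V) (y₁ : V) : ℕ → Set V
  | 0 => {y₁}
  | n + 1 => tessV0 G y₁ n ∪ extBoundary G (⋃ y ∈ tessV0 G y₁ n, plaquette G y)

/-- `level G y₁ n` is the set `V_{n+1}` of the paper: `V_{n+1} = ⋃_{y ∈ V_{0,n+1}} ({y} ∪ N_y)`. -/
def level {V : Type*} (G : SimpleGraph V) (y₁ : V) (n : ℕ) : Set V :=
  ⋃ y ∈ tessV0 G y₁ n, plaquette G y

/-- The tessellation `V₀ := ⋃_{n ≥ 1} V_{0,n}`. -/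
def tess {V : Type*} (G : SimpleGraph V) (y₁ : V) : Set V :=
  ⋃ n, tessV0 G y₁ n

lemma tessV0_mono {V : Type*} (G : SimpleGraph V) (y₁ : V) {m n : ℕ} (h : m ≤ n) :
    tessV0 G y₁ m ⊆ tessV0 G y₁ n := by
  induction n with
  | zero => simpa [Nat.le_zero.mp h] using subset_rfl
  | succ k ih =>
    rcases Nat.le_succ_iff.mp h with h' | h'
    · exact (ih h').trans (Set.subset_union_left)
    · simp [h']

lemma tessV0_subset_level {V : Type*} (G : SimpleGraph V) (y₁ : V) (n : ℕ) :
    tessV0 G y₁ n ⊆ level G y₁ n := fun x hx =>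
  Set.mem_biUnion hx (Set.mem_insert x _)

lemma level_mono {V : Type*} (G : SimpleGraph V) (y₁ : V) {m n : ℕ} (h : m ≤ n) :
    level G y₁ m ⊆ level G y₁ n := by
  intro x hx
  rcases Set.mem_iUnion₂.mp hx with ⟨y, hy, hxy⟩
  exact Set.mem_biUnion (tessV0_mono G y₁ h hy) hxy

lemma tessV0_inter_level {V : Type*} (G : SimpleGraph V) (y₁ : V) {m n : ℕ} (h : n ≤ m) :
    tessV0 G y₁ m ∩ level G y₁ n ⊆ tessV0 G y₁ n := by
  induction m with
  | zero => simp [Nat.le_zero.mp h]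
  | succ k ih =>
    rcases Nat.le_succ_iff.mp h with h' | h'
    · rintro x ⟨hx, hxl⟩
      rcases hx with hx | hx
      · exact ih h' ⟨hx, hxl⟩
      · exact absurd (level_mono G y₁ h' hxl) hx.1
    · subst h'; exact fun x hx => hx.1

/-- For every `n ≥ 1`, the inner boundary of `V_n` contains no tessellation
vertex: `∂V_n ∩ V₀ = ∅`. -/
theorem stmt_8 {V : Type*} [Infinite V] (G : SimpleGraph V) (hconn : G.Connected)
    (hlf : ∀ v : V, (G.neighborSet v).Finite) (y₁ : V) (n : ℕ) :
    innBoundary G (level G y₁ n) ∩ tess G y₁ = ∅ := by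
  ext x
  simp only [Set.mem_inter_iff, Set.mem_empty_iff_false, iff_false, tess, Set.mem_iUnion]
  rintro ⟨⟨hxl, y, hy, hxy⟩, m, hm⟩
  have hx0 : x ∈ tessV0 G y₁ n :=
    tessV0_inter_level G y₁ (Nat.le_max_right m n)
      ⟨tessV0_mono G y₁ (Nat.le_max_left m n) hm, hxl⟩
  exact hy (Set.mem_biUnion hx0 (Set.mem_insert_of_mem x hxy))
end

section
/- Every vertex of G lies in the plaquette of some tessellation vertex: V = ⋃_{y ∈ V₀} ({y} ∪ N_y). In particular, for each x ∈ V \ V₀ there exists y ∈ V₀ with x ∈ N_y. -/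

lemma step_level {V : Type*} (G : SimpleGraph V) (y₁ : V) {a b : V} {n : ℕ}
    (ha : a ∈ level G y₁ n) (hadj : G.Adj a b) : ∃ m, b ∈ level G y₁ m := by
  by_cases hb : b ∈ level G y₁ n
  · exact ⟨n, hb⟩
  · refine ⟨n + 1, Set.mem_biUnion ?_ (Set.mem_insert _ _)⟩
    exact Or.inr ⟨hb, a, ha, hadj⟩

lemma all_in_level {V : Type*} (G : SimpleGraph V) (y₁ : V) (x : V)
    (h : G.Reachable y₁ x) : ∃ n, x ∈ level G y₁ n := by
  obtain ⟨w⟩ := h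
  have key : ∀ {a b : V} (_ : G.Walk a b), (∃ n, a ∈ level G y₁ n) →
      ∃ n, b ∈ level G y₁ n := by
    intro a b w
    induction w with
    | nil => exact id
    | cons hadj w ih =>
        rintro ⟨n, ha⟩
        exact ih (step_level G y₁ ha hadj)
  exact key w ⟨0, Set.mem_biUnion rfl (Set.mem_insert _ _)⟩

/-- `V = ⋃_{y ∈ V₀} ({y} ∪ N_y)`; in particular, for each `x ∈ V \ V₀`
there exists `y ∈ V₀` with `x ∈ N_y`. -/
theorem stmt_10 {V : Type*} [Infinite V] (G : SimpleGraph V) (hconn : G.Connected)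
    (hlf : ∀ v : V, (G.neighborSet v).Finite) (y₁ : V) :
    (⋃ y ∈ tess G y₁, plaquette G y) = Set.univ ∧
      ∀ x : V, x ∉ tess G y₁ → ∃ y ∈ tess G y₁, x ∈ G.neighborSet y := by
  have huniv : (⋃ y ∈ tess G y₁, plaquette G y) = Set.univ := by
    ext x
    simp only [Set.mem_univ, iff_true]
    obtain ⟨n, hx⟩ := all_in_level G y₁ x (hconn.preconnected y₁ x)
    obtain ⟨y, hy, hxy⟩ := Set.mem_iUnion₂.mp hx
    exact Set.mem_biUnion (Set.mem_iUnion.mpr ⟨n, hy⟩) hxy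
  refine ⟨huniv, fun x hx => ?_⟩
  have : x ∈ ⋃ y ∈ tess G y₁, plaquette G y := huniv ▸ Set.mem_univ x
  obtain ⟨y, hy, hxy⟩ := Set.mem_iUnion₂.mp this
  rcases hxy with rfl | hmem
  · exact absurd hy hx
  · exact ⟨y, hy, hmem⟩
end
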